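/- Let H be a complex Hilbert space and let A : H → H be a bounded positive self-adjoint operator (a continuous linear map with A* = A and Re⟨Ax, x⟩ ≥ 0 for all x). Suppose φ ∈ H and Λ ≥ 0 satisfy ‖φ‖ ≤ Λ·‖Aφ‖. Then for every natural number t ≥ 0 and every k of the form k = 2^l with l = 0, 1, 2, …, one has ‖A^t φ‖ ≤ Λ^k·‖A^{k+t} φ‖; in particular ‖φ‖ ≤ Λ^k·‖A^k φ‖ for every such k. -/

import Mathlib

/-!
By self-adjointness `‖A x‖² = ⟪A² x, x⟫ ≤ ‖A² x‖ ‖x‖`, so the sequence `aₙ = ‖Aⁿ φ‖` is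
log-convex: `aₙ₊₁² ≤ aₙ aₙ₊₂`. Log-convexity propagates the ratio bound `a₀ ≤ Λ a₁` to
`aₙ ≤ Λ aₙ₊₁` for every `n`, and chaining `k` of these gives `aₜ ≤ Λᵏ aₖ₊ₜ`.
-/

open RCLike in
theorem LinearMap.IsSymmetric.norm_apply_sq_le {𝕜 E : Type*} [RCLike 𝕜] [NormedAddCommGroup E]
    [InnerProductSpace 𝕜 E] {T : E →ₗ[𝕜] E} (hT : T.IsSymmetric) (x : E) :
    ‖T x‖ ^ 2 ≤ ‖T (T x)‖ * ‖x‖ :=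
  calc ‖T x‖ ^ 2 = re (inner 𝕜 (T (T x)) x) := by rw [hT, inner_self_eq_norm_sq]
    _ ≤ ‖inner 𝕜 (T (T x)) x‖ := re_le_norm _
    _ ≤ ‖T (T x)‖ * ‖x‖ := norm_inner_le_norm _ _

section RatioBound

variable {a : ℕ → ℝ} {Λ : ℝ}

theorem le_mul_succ_of_sq_le_mul_succ_succ (hΛ : 0 ≤ Λ) (ha : ∀ n, 0 ≤ a n)
    (hconv : ∀ n, a (n + 1) ^ 2 ≤ a n * a (n + 2)) (h₀ : a 0 ≤ Λ * a 1) (n : ℕ) :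
    a n ≤ Λ * a (n + 1) := by
  induction n with
  | zero => exact h₀
  | succ n ih =>
    have hsq : a (n + 1) * a (n + 1) ≤ a (n + 1) * (Λ * a (n + 2)) :=
      calc a (n + 1) * a (n + 1) = a (n + 1) ^ 2 := (sq _).symm
        _ ≤ a n * a (n + 2) := hconv n
        _ ≤ Λ * a (n + 1) * a (n + 2) := mul_le_mul_of_nonneg_right ih (ha _)
        _ = a (n + 1) * (Λ * a (n + 2)) := by ring
    rcases (ha (n + 1)).eq_or_lt with h | h
    · rw [← h]
      exact mul_nonneg hΛ (ha _)
    · exact le_of_mul_le_mul_left hsq h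

theorem le_pow_mul_add_of_le_mul_succ (hΛ : 0 ≤ Λ) (h : ∀ n, a n ≤ Λ * a (n + 1)) (k t : ℕ) :
    a t ≤ Λ ^ k * a (k + t) := by
  induction k with
  | zero => simp
  | succ k ih =>
    calc a t ≤ Λ ^ k * a (k + t) := ih
      _ ≤ Λ ^ k * (Λ * a (k + t + 1)) := mul_le_mul_of_nonneg_left (h _) (by positivity)
      _ = Λ ^ (k + 1) * a (k + 1 + t) := by rw [Nat.add_right_comm]; ring

end RatioBound

theorem iterated_poincare {H : Type*} [NormedAddCommGroup H] [InnerProductSpace ℂ H]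
    [CompleteSpace H] (A : H →L[ℂ] H)
    (hsa : IsSelfAdjoint A)
    (φ : H) (Λ : ℝ) (hΛ : 0 ≤ Λ) (hφ : ‖φ‖ ≤ Λ * ‖A φ‖) :
    (∀ t l : ℕ, ‖(A ^ t) φ‖ ≤ Λ ^ (2 ^ l) * ‖(A ^ (2 ^ l + t)) φ‖) ∧
      (∀ l : ℕ, ‖φ‖ ≤ Λ ^ (2 ^ l) * ‖(A ^ (2 ^ l)) φ‖) := by
  have hconv (n : ℕ) : ‖(A ^ (n + 1)) φ‖ ^ 2 ≤ ‖(A ^ n) φ‖ * ‖(A ^ (n + 2)) φ‖ := by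
    rw [mul_comm, pow_succ' A (n + 1), pow_succ' A n]
    exact hsa.isSymmetric.norm_apply_sq_le ((A ^ n) φ)
  have hratio := le_mul_succ_of_sq_le_mul_succ_succ (a := fun n ↦ ‖(A ^ n) φ‖) hΛ
    (fun _ ↦ norm_nonneg _) hconv (by simpa using hφ)
  have hchain := le_pow_mul_add_of_le_mul_succ hΛ hratio
  exact ⟨fun t l ↦ hchain (2 ^ l) t, fun l ↦ by simpa using hchain (2 ^ l) 0⟩
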